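/- arXiv:0903.3471 — 3 statements merged into one kernel-verified Lean document; each statement's English description precedes it below -/
import Mathlib

section
/- For f_n(z) = Σ_{k=0}^n a_k z^{k+1} with a_0 ≠ 0 and k ∈ ℤ, the quantity a_0^{n−2k−1} μ_k(f_n) is a polynomial in a_0, a_1, conj(a_1), …, a_n, conj(a_n); in particular μ_k(f_n) is a rational function of the coefficients with denominator a power of a_0. -/
open Finset

/-- The polynomial `f_n(z) = Σ_{k=0}^n a_k z^{k+1}` as a formal Laurent series. -/
noncomputable def fL (n : ℕ) (a : ℕ → ℂ) : LaurentSeries ℂ :=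
  ∑ k ∈ Finset.range (n + 1), HahnSeries.single ((k : ℤ) + 1) (a k)

/-- `f_n^*(z) = Σ_{k=0}^n conj(a_k) z^{-k-1}` as a formal Laurent series. -/
noncomputable def fStar (n : ℕ) (a : ℕ → ℂ) : LaurentSeries ℂ :=
  ∑ k ∈ Finset.range (n + 1), HahnSeries.single (-(k : ℤ) - 1) ((starRingEnd ℂ) (a k))

/-- `f_n'(z) = Σ_{k=0}^n (k+1) a_k z^k` as a formal Laurent series. -/
noncomputable def fD (n : ℕ) (a : ℕ → ℂ) : LaurentSeries ℂ :=
  ∑ k ∈ Finset.range (n + 1), HahnSeries.single ((k : ℤ)) (((k : ℂ) + 1) * a k)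

/-- The `k`th moment `μ_k(f_n) = CT_z (z f_n^* f_n' f_n^k)`, the constant term of
the formal Laurent series `z f_n^*(z) f_n'(z) f_n(z)^k` (with `f_n^k` interpreted
in the field of formal Laurent series for negative `k`). -/
noncomputable def mu (n : ℕ) (a : ℕ → ℂ) (k : ℤ) : ℂ :=
  ((HahnSeries.single (1 : ℤ) (1 : ℂ)) * fStar n a * fD n a * (fL n a) ^ k).coeff 0

/-!
Put `U(z) = 1 + ∑_{i ≥ 1} a_i a₀^{i-1} zⁱ`, so that `f_n(z) = a₀ z U(z / a₀)`. The series `U` has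
constant term `1` and coefficients polynomial in `a₀, …, a_n`, so for every `k ∈ ℤ` the power
series `U^k` again has polynomial coefficients, and `f_n^k = a₀^k z^k U^k(z / a₀)`. Expanding the
constant term gives `μ_k = ∑_{p,q} conj(a_p) (q+1) a_q a₀^k a₀^{-(p-q-k)} [z^{p-q-k}] U^k`; with
`a_q = a₀^{1-q} [z^q] U` the powers of `a₀` in `a₀^{n-2k-1}` times the `(p, q)` summand collapse
to `a₀^{n-p}`, leaving a polynomial.
-/

theorem RingHom.map_units_zpow {A K : Type*} [Semiring A] [DivisionSemiring K] (ψ : A →+* K)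
    (u : Aˣ) (k : ℤ) : ψ ↑(u ^ k) = ψ ↑u ^ k := by
  have h := congrArg Units.val (map_zpow (Units.map (ψ : A →* K)) u k)
  rwa [Units.coe_map, Units.val_zpow_eq_zpow_val, Units.coe_map] at h

theorem LaurentSeries.single_one_zpow {K : Type*} [Field K] (c : K) (k : ℤ) :
    (HahnSeries.single (1 : ℤ) c : LaurentSeries K) ^ k = HahnSeries.single k (c ^ k) := by
  have hc : (HahnSeries.single (1 : ℤ) c : LaurentSeries K) = HahnSeries.C c * HahnSeries.single 1 1 := by
    rw [HahnSeries.C_apply, HahnSeries.single_mul_single, zero_add, mul_one]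
  rw [hc, mul_zpow, ← map_zpow₀, ← RatFunc.single_zpow, HahnSeries.C_apply, HahnSeries.single_mul_single,
    zero_add, mul_one]

theorem PowerSeries.rescale_monomial {R : Type*} [CommSemiring R] (c r : R) (i : ℕ) :
    PowerSeries.rescale c (PowerSeries.monomial i r) = PowerSeries.monomial i (c ^ i * r) := by
  ext j
  rw [PowerSeries.coeff_rescale, PowerSeries.coeff_monomial, PowerSeries.coeff_monomial]
  split_ifs with h <;> simp [h]

theorem PowerSeries.map_monomial {R S : Type*} [Semiring R] [Semiring S] (φ : R →+* S) (i : ℕ)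
    (r : R) : PowerSeries.map φ (PowerSeries.monomial i r) = PowerSeries.monomial i (φ r) := by
  ext j
  rw [PowerSeries.coeff_map, PowerSeries.coeff_monomial, PowerSeries.coeff_monomial]
  split_ifs <;> simp

theorem LaurentSeries.coe_monomial {R : Type*} [Semiring R] (i : ℕ) (r : R) :
    ((PowerSeries.monomial i r : PowerSeries R) : LaurentSeries R) = HahnSeries.single (i : ℤ) r := by
  rw [PowerSeries.monomial_eq_C_mul_X_pow, map_mul, HahnSeries.ofPowerSeries_C,
    HahnSeries.ofPowerSeries_X_pow, HahnSeries.C_apply, HahnSeries.single_mul_single, zero_add, mul_one]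

theorem LaurentSeries.coeff_coe_rescale_map {R K : Type*} [CommRing R] [Field K] (φ : R →+* K)
    (c : K) (g : PowerSeries R) (j : ℤ) :
    ((PowerSeries.rescale c (PowerSeries.map φ g) : PowerSeries K) : LaurentSeries K).coeff j =
      c ^ j * φ (((g : PowerSeries R) : LaurentSeries R).coeff j) := by
  rw [PowerSeries.coeff_coe, PowerSeries.coeff_coe]
  split_ifs with hj
  · simp
  · rw [PowerSeries.coeff_rescale, PowerSeries.coeff_map, ← zpow_natCast,
      Int.natAbs_of_nonneg (not_lt.1 hj)]

section Normalized

variable {R : Type*} [CommRing R] {n : ℕ}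

/-- The coefficients of `F(c₀ z) / c₀` for `F(z) = ∑ cᵢ zⁱ`; no division by `c₀` is needed, and
the constant term is `1`, so all integer powers of the series exist over `R`. -/
noncomputable def normalizedCoeff (c : Fin (n + 1) → R) (i : Fin (n + 1)) : R :=
  if i = 0 then 1 else c i * c 0 ^ ((i : ℕ) - 1)

noncomputable def normalizedSeries (c : Fin (n + 1) → R) : PowerSeries R :=
  ∑ i : Fin (n + 1), PowerSeries.monomial (i : ℕ) (normalizedCoeff c i)

theorem constantCoeff_normalizedSeries (c : Fin (n + 1) → R) :
    PowerSeries.constantCoeff (normalizedSeries c) = 1 := by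
  rw [← PowerSeries.coeff_zero_eq_constantCoeff_apply, normalizedSeries, map_sum, Fin.sum_univ_succ]
  simp [PowerSeries.coeff_monomial, normalizedCoeff]

theorem isUnit_normalizedSeries (c : Fin (n + 1) → R) : IsUnit (normalizedSeries c) :=
  PowerSeries.isUnit_iff_constantCoeff.2 (by rw [constantCoeff_normalizedSeries]; exact isUnit_one)

noncomputable def normalizedUnit (c : Fin (n + 1) → R) : (PowerSeries R)ˣ :=
  (isUnit_normalizedSeries c).unit

theorem coe_normalizedUnit (c : Fin (n + 1) → R) :
    (normalizedUnit c : PowerSeries R) = normalizedSeries c :=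
  (isUnit_normalizedSeries c).unit_spec

noncomputable def normalizedZpow (c : Fin (n + 1) → R) (k : ℤ) : PowerSeries R :=
  ↑(normalizedUnit c ^ k)

theorem map_normalizedCoeff {S : Type*} [CommRing S] (φ : R →+* S) (c : Fin (n + 1) → R)
    (i : Fin (n + 1)) : φ (normalizedCoeff c i) = normalizedCoeff (φ ∘ c) i := by
  unfold normalizedCoeff
  split_ifs <;> simp

theorem map_normalizedSeries {S : Type*} [CommRing S] (φ : R →+* S) (c : Fin (n + 1) → R) :
    PowerSeries.map φ (normalizedSeries c) = normalizedSeries (φ ∘ c) := by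
  simp only [normalizedSeries, map_sum, PowerSeries.map_monomial, map_normalizedCoeff]

theorem mul_inv_pow_mul_normalizedCoeff {K : Type*} [Field K] (c : Fin (n + 1) → K) (hc : c 0 ≠ 0)
    (i : Fin (n + 1)) : c 0 * ((c 0)⁻¹ ^ (i : ℕ) * normalizedCoeff c i) = c i := by
  unfold normalizedCoeff
  split_ifs with hi
  · simp [hi]
  · obtain ⟨j, hj⟩ := Nat.exists_eq_succ_of_ne_zero (Fin.val_ne_zero_iff.2 hi)
    rw [hj, Nat.succ_sub_one, pow_succ, inv_pow]
    field_simp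

end Normalized

open HahnSeries in
theorem mu_eq_sum {n : ℕ} {a : ℕ → ℂ} {k : ℤ} {c : ℂ} {G : LaurentSeries ℂ}
    (h : fL n a ^ k = single k c * G) :
    mu n a k = ∑ p : Fin (n + 1), ∑ q : Fin (n + 1),
      (starRingEnd ℂ) (a p) * (((q : ℂ) + 1) * a q) * c * G.coeff ((p : ℤ) - q - k) := by
  rw [mu, h, fStar, fD, ← Fin.sum_univ_eq_sum_range (fun p => single (-(p : ℤ) - 1) _),
    ← Fin.sum_univ_eq_sum_range (fun q => single (q : ℤ) _)]
  simp only [Finset.mul_sum, Finset.sum_mul, coeff_sum]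
  rw [Finset.sum_comm]
  refine Finset.sum_congr rfl fun p _ => Finset.sum_congr rfl fun q _ => ?_
  rw [single_mul_single, single_mul_single, ← mul_assoc, single_mul_single, coeff_single_mul]
  congr 2 <;> ring

noncomputable def coeffEval (n : ℕ) (a : ℕ → ℂ) : MvPolynomial (Fin (n + 1) ⊕ Fin n) ℂ →+* ℂ :=
  MvPolynomial.eval (Sum.elim (fun i : Fin (n + 1) => a i)
    (fun i : Fin n => (starRingEnd ℂ) (a ((i : ℕ) + 1))))

noncomputable def coeffVar (n : ℕ) (i : Fin (n + 1)) : MvPolynomial (Fin (n + 1) ⊕ Fin n) ℂ :=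
  MvPolynomial.X (Sum.inl i)

/-- `conj a₀` is represented by the variable of `a₀` itself, which is right only for real `a₀`. -/
noncomputable def conjCoeffVar (n : ℕ) (p : Fin (n + 1)) : MvPolynomial (Fin (n + 1) ⊕ Fin n) ℂ :=
  Fin.cases (coeffVar n 0) (fun i => MvPolynomial.X (Sum.inr i)) p

noncomputable def muPoly (n : ℕ) (k : ℤ) : MvPolynomial (Fin (n + 1) ⊕ Fin n) ℂ :=
  ∑ p : Fin (n + 1), ∑ q : Fin (n + 1),
    conjCoeffVar n p * coeffVar n 0 ^ (n - p : ℕ) *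
      (((q + 1 : ℕ) : MvPolynomial (Fin (n + 1) ⊕ Fin n) ℂ) * normalizedCoeff (coeffVar n) q) *
      (normalizedZpow (coeffVar n) k : LaurentSeries _).coeff ((p : ℤ) - q - k)

section Evaluation

variable {n : ℕ} {a : ℕ → ℂ}

theorem coeffEval_coeffVar (i : Fin (n + 1)) : coeffEval n a (coeffVar n i) = a i := by
  simp [coeffEval, coeffVar]

theorem coeffEval_comp_coeffVar : coeffEval n a ∘ coeffVar n = fun i : Fin (n + 1) => a i :=
  funext coeffEval_coeffVar

theorem coeffEval_conjCoeffVar (hreal : (starRingEnd ℂ) (a 0) = a 0) (p : Fin (n + 1)) :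
    coeffEval n a (conjCoeffVar n p) = (starRingEnd ℂ) (a p) := by
  cases p using Fin.cases with
  | zero => simp [conjCoeffVar, coeffEval, coeffVar, hreal]
  | succ i => simp [conjCoeffVar, coeffEval]

theorem fL_eq_single_mul_rescale (ha : a 0 ≠ 0) :
    fL n a = HahnSeries.single 1 (a 0) *
      (PowerSeries.rescale (a 0)⁻¹ (normalizedSeries fun i : Fin (n + 1) => a i) : LaurentSeries ℂ) := by
  rw [fL, ← Fin.sum_univ_eq_sum_range (fun i => HahnSeries.single ((i : ℤ) + 1) (a i)),
    normalizedSeries, map_sum, map_sum, Finset.mul_sum]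
  refine Finset.sum_congr rfl fun i _ => ?_
  rw [PowerSeries.rescale_monomial, LaurentSeries.coe_monomial, HahnSeries.single_mul_single,
    add_comm]
  exact congrArg _ (mul_inv_pow_mul_normalizedCoeff (fun i : Fin (n + 1) => a i) ha i).symm

theorem fL_zpow (ha : a 0 ≠ 0) (k : ℤ) :
    fL n a ^ k = HahnSeries.single k (a 0 ^ k) *
      (PowerSeries.rescale (a 0)⁻¹ (PowerSeries.map (coeffEval n a)
        (normalizedZpow (coeffVar n) k)) : LaurentSeries ℂ) := by
  let θ := (HahnSeries.ofPowerSeries ℤ ℂ).comp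
    ((PowerSeries.rescale (a 0)⁻¹).comp (PowerSeries.map (coeffEval n a)))
  have hθ : fL n a = HahnSeries.single 1 (a 0) * θ ↑(normalizedUnit (coeffVar n)) := by
    rw [fL_eq_single_mul_rescale ha, ← coeffEval_comp_coeffVar, ← map_normalizedSeries,
      ← coe_normalizedUnit]
    rfl
  rw [hθ, mul_zpow, LaurentSeries.single_one_zpow, ← RingHom.map_units_zpow]
  rfl

theorem coeffEval_muPoly (ha : a 0 ≠ 0) (hreal : (starRingEnd ℂ) (a 0) = a 0) (k : ℤ) :
    coeffEval n a (muPoly n k) = a 0 ^ ((n : ℤ) - 2 * k - 1) * mu n a k := by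
  rw [mu_eq_sum (fL_zpow ha k), muPoly, map_sum, Finset.mul_sum]
  refine Finset.sum_congr rfl fun p _ => ?_
  rw [map_sum, Finset.mul_sum]
  refine Finset.sum_congr rfl fun q _ => ?_
  rw [LaurentSeries.coeff_coe_rescale_map, map_mul, map_mul, map_mul, map_mul, map_pow,
    coeffEval_conjCoeffVar hreal, map_normalizedCoeff, coeffEval_comp_coeffVar, map_natCast,
    coeffEval_coeffVar, ← mul_inv_pow_mul_normalizedCoeff (fun i : Fin (n + 1) => a i) ha q,
    Fin.val_zero]
  have hp := p.isLt
  have hpow : a 0 ^ ((n : ℤ) - 2 * k - 1) * a 0 * (a 0)⁻¹ ^ (q : ℕ) * a 0 ^ k *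
      (a 0)⁻¹ ^ ((p : ℤ) - q - k) = a 0 ^ (n - p : ℕ) := by
    rw [← zpow_natCast (a 0) (n - p), show ((n - p : ℕ) : ℤ) =
      ((n : ℤ) - 2 * k - 1) + 1 + -(q : ℤ) + k + -((p : ℤ) - q - k) by omega]
    simp only [zpow_add₀ ha, zpow_neg, zpow_one, zpow_natCast, inv_zpow, inv_pow]
  rw [← hpow]
  push_cast
  ring

end Evaluation

/-- `a₀^{n-2k-1} μ_k(f_n)` is a polynomial in `a₀, a₁, conj a₁, …, a_n, conj a_n`
(here `a₀` is treated as a real variable, `conj a₀ = a₀`). -/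
theorem mu_polynomial_in_coefficients (n : ℕ) (k : ℤ) :
    ∃ P : MvPolynomial (Fin (n + 1) ⊕ Fin n) ℂ,
      ∀ a : ℕ → ℂ, a 0 ≠ 0 → (starRingEnd ℂ) (a 0) = a 0 →
        (a 0) ^ ((n : ℤ) - 2 * k - 1) * mu n a k =
          MvPolynomial.eval
            (Sum.elim (fun i : Fin (n + 1) => a i)
              (fun i : Fin n => (starRingEnd ℂ) (a ((i : ℕ) + 1)))) P :=
  ⟨muPoly n k, fun _ ha hreal => (coeffEval_muPoly ha hreal k).symm⟩
end

section
/- Richardson's formula: for f_n(z) = Σ_{j=0}^n a_j z^{j+1} and k ≥ 0, μ_k(f_n) = Σ (s_0 + 1) a_{s_0} a_{s_1} ⋯ a_{s_k} · conj(a_{s_0 + s_1 + ⋯ + s_k + k}), where the sum runs over all multi-indices (s_0, …, s_k) with 0 ≤ s_j ≤ n (terms with s_0+⋯+s_k+k > n are zero since a_m := 0 for m > n). -/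
/-!
Writing `z f_n' f_n^k` as a product of `k + 1` sums of monomials `a_x z^{x+1}` (the first one
weighted by `x + 1`) expands it as a sum over `s : Fin (k + 1) → Fin (n + 1)` of monomials of
degree `s₀ + ⋯ + s_k + k + 1`. Against such a monomial, the only term of `f_n^*` contributing
to the constant term is `conj(a_m) z^{-m-1}` with `m = s₀ + ⋯ + s_k + k`, present iff `m ≤ n`.
-/

open Finset

theorem HahnSeries.prod_single {Γ R ι : Type*} [AddCommMonoid Γ] [PartialOrder Γ]
    [IsOrderedCancelAddMonoid Γ] [CommSemiring R] (s : Finset ι) (g : ι → Γ) (r : ι → R) :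
    ∏ i ∈ s, single (g i) (r i) = single (∑ i ∈ s, g i) (∏ i ∈ s, r i) := by
  induction s using Finset.cons_induction with
  | empty => rfl
  | cons i s hi ih => rw [prod_cons, prod_cons, sum_cons, ih, single_mul_single]

theorem single_one_mul_fD (n : ℕ) (a : ℕ → ℂ) :
    HahnSeries.single 1 1 * fD n a =
      ∑ x : Fin (n + 1), HahnSeries.single ((x : ℤ) + 1) (((x : ℂ) + 1) * a x) := by
  rw [fD, mul_sum, ← Fin.sum_univ_eq_sum_range]
  simp only [HahnSeries.single_mul_single, one_mul, add_comm (1 : ℤ)]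

theorem fL_eq_sum_fin (n : ℕ) (a : ℕ → ℂ) :
    fL n a = ∑ x : Fin (n + 1), HahnSeries.single ((x : ℤ) + 1) (a x) :=
  (Fin.sum_univ_eq_sum_range (fun x => HahnSeries.single ((x : ℤ) + 1) (a x)) _).symm

theorem single_one_mul_fD_mul_fL_pow (n : ℕ) (a : ℕ → ℂ) (k : ℕ) :
    HahnSeries.single 1 1 * fD n a * fL n a ^ k =
      ∑ s : Fin (k + 1) → Fin (n + 1),
        HahnSeries.single (((∑ j, (s j : ℕ) + k : ℕ) : ℤ) + 1)
          ((((s 0 : ℕ) : ℂ) + 1) * ∏ j, a (s j)) := by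
  let w : Fin (k + 1) → Fin (n + 1) → ℂ := fun j x => if j = 0 then (x : ℂ) + 1 else 1
  calc _ = ∏ j : Fin (k + 1), ∑ x : Fin (n + 1),
        HahnSeries.single ((x : ℤ) + 1) (w j x * a x) := by
        simp [w, Fin.prod_univ_succ, single_one_mul_fD, fL_eq_sum_fin, Fin.succ_ne_zero]
    _ = ∑ s : Fin (k + 1) → Fin (n + 1),
        ∏ j, HahnSeries.single ((s j : ℤ) + 1) (w j (s j) * a (s j)) := by
        rw [prod_univ_sum, Fintype.piFinset_univ]
    _ = _ := by
      refine sum_congr rfl fun s _ => ?_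
      have hexp : ∑ j, ((s j : ℤ) + 1) = ((∑ j, (s j : ℕ) + k : ℕ) : ℤ) + 1 := by
        push_cast
        rw [sum_add_distrib, sum_const, card_univ, Fintype.card_fin]
        ring
      rw [HahnSeries.prod_single, hexp, prod_mul_distrib, Fin.prod_univ_succ (fun j => w j (s j))]
      simp [w, Fin.succ_ne_zero]

theorem coeff_zero_fStar_mul_single (n : ℕ) (a : ℕ → ℂ) (N : ℕ) (c : ℂ) :
    (fStar n a * HahnSeries.single ((N : ℤ) + 1) c).coeff 0 =
      c * starRingEnd ℂ (if N ≤ n then a N else 0) := by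
  have hexp (m : ℕ) : (-(m : ℤ) - 1 + ((N : ℤ) + 1) = 0) ↔ N = m := by omega
  simp only [fStar, sum_mul, HahnSeries.single_mul_single, HahnSeries.coeff_sum,
    HahnSeries.coeff_single, eq_comm (a := (0 : ℤ)), hexp, sum_ite_eq, mem_range,
    Nat.lt_succ_iff]
  split_ifs <;> simp [mul_comm]

theorem richardson_formula_general (n : ℕ) (a : ℕ → ℂ) (k : ℕ) :
    mu n a (k : ℤ) =
      ∑ s : Fin (k + 1) → Fin (n + 1),
        (((s 0 : ℕ) : ℂ) + 1) * (∏ j, a (s j)) *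
          (starRingEnd ℂ)
            (if (∑ j, ((s j : ℕ))) + k ≤ n then a ((∑ j, ((s j : ℕ))) + k) else 0) := by
  have hmu :
      mu n a k = (fStar n a * (HahnSeries.single 1 1 * fD n a * fL n a ^ k)).coeff 0 := by
    rw [mu, zpow_natCast]
    ac_rfl
  rw [hmu, single_one_mul_fD_mul_fL_pow, mul_sum, HahnSeries.coeff_sum]
  simp only [coeff_zero_fStar_mul_single, mul_assoc]

/-- Richardson's formula for the nonnegative moments:
`μ_k(f_n) = Σ_{(s₀,…,s_k)} (s₀+1) a_{s₀} ⋯ a_{s_k} conj(a_{s₀+⋯+s_k+k})`,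
the sum over all multi-indices with `0 ≤ s_j ≤ n`, where `a_m := 0` for `m > n`. -/
theorem richardson_formula (n : ℕ) (a : ℕ → ℂ) (ha : a 0 ≠ 0) (k : ℕ) :
    mu n a (k : ℤ) =
      ∑ s : Fin (k + 1) → Fin (n + 1),
        (((s 0 : ℕ) : ℂ) + 1) * (∏ j, a (s j)) *
          (starRingEnd ℂ)
            (if (∑ j, ((s j : ℕ))) + k ≤ n then a ((∑ j, ((s j : ℕ))) + k) else 0) :=
  richardson_formula_general n a k
end

section
/- For f_1(z) = a_0 z + a_1 z^2 with a_0 ≠ 0, the moment μ_{−1}(f_1) equals a_1 − a_1^2 conj(a_1)/a_0^2. -/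
open Finset

/-! Division with remainder by `f₁ = a₀ z + a₁ z²` gives `z f₁^* f₁' = q f₁ + c z²` with a
Laurent polynomial `q` whose constant term is `a₁ − a₁² ā₁ / a₀²`. Since `f₁` has order `1`, the
remainder `c z² / f₁` has order `1`, so the constant term of `z f₁^* f₁' / f₁ = q + c z² / f₁` is
that of `q`. -/

open HahnSeries

namespace LaurentSeries

variable {K : Type*} [Field K]

theorem order_inv {f : LaurentSeries K} (hf : f ≠ 0) : f⁻¹.order = -f.order := by
  have h := order_mul hf (inv_ne_zero hf)
  rw [mul_inv_cancel₀ hf, order_one] at h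
  omega

theorem coeff_mul_add_single_mul_inv {f : LaurentSeries K} (hf : f ≠ 0)
    (q : LaurentSeries K) {m n : ℤ} (hmn : m + f.order < n) (c : K) :
    ((q * f + single n c) * f⁻¹).coeff m = q.coeff m := by
  have hrem : (single n c * f⁻¹).coeff m = c * f⁻¹.coeff (m - n) := by
    simpa using coeff_single_mul_add (r := c) (x := f⁻¹) (a := m - n) (b := n)
  rw [add_mul, mul_assoc, mul_inv_cancel₀ hf, mul_one, coeff_add, hrem,
    coeff_eq_zero_of_lt_order (x := f⁻¹) (by rw [order_inv hf]; omega), mul_zero, add_zero]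

/-- `z f₁^* f₁'` divided by `f₁` with remainder, for `A = a₀ = ā₀`, `B = a₁`, `B' = ā₁`. -/
theorem single_one_mul_mul_eq_mul_add_single {A B B' : K} (hA : A ≠ 0) :
    single (1 : ℤ) (1 : K) * (single (-1) A + single (-2) B') * (single 0 A + single 1 (2 * B)) =
      (single (-2) B' + single (-1) (A + B * B' / A) + single 0 (B - B ^ 2 * B' / A ^ 2)) *
          (single 1 A + single 2 B) +
        single 2 (-((B - B ^ 2 * B' / A ^ 2) * B)) := by
  ext g
  simp only [mul_add, add_mul, single_mul_single, coeff_add, coeff_single]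
  norm_num
  split_ifs <;> first | omega | (field_simp; ring)

end LaurentSeries

theorem fL_one (a : ℕ → ℂ) : fL 1 a = single 1 (a 0) + single 2 (a 1) := by
  simp [fL, sum_range_succ]

theorem fStar_one (a : ℕ → ℂ) :
    fStar 1 a = single (-1) ((starRingEnd ℂ) (a 0)) + single (-2) ((starRingEnd ℂ) (a 1)) := by
  simp [fStar, sum_range_succ]

theorem fD_one (a : ℕ → ℂ) : fD 1 a = single 0 (a 0) + single 1 (2 * a 1) := by
  simp [fD, sum_range_succ]
  norm_num

theorem coeff_fL_one_one (a : ℕ → ℂ) : (fL 1 a).coeff 1 = a 0 := by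
  simp [fL_one]

/-- `μ_{-1}(f₁) = a₁ − a₁² conj(a₁)/a₀²` (with `a₀` real). -/
theorem mu_neg_one_formula (a : ℕ → ℂ) (ha : a 0 ≠ 0)
    (hreal : (starRingEnd ℂ) (a 0) = a 0) :
    mu 1 a (-1) = a 1 - (a 1) ^ 2 * (starRingEnd ℂ) (a 1) / (a 0) ^ 2 := by
  have hcoeff : (fL 1 a).coeff 1 ≠ 0 := by rwa [coeff_fL_one_one]
  rw [mu, zpow_neg, zpow_one, fStar_one, fD_one, hreal,
    LaurentSeries.single_one_mul_mul_eq_mul_add_single ha, ← fL_one,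
    LaurentSeries.coeff_mul_add_single_mul_inv (ne_zero_of_coeff_ne_zero hcoeff) _
      (by linarith [order_le_of_coeff_ne_zero hcoeff])]
  simp
end
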